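/- For every Z ≥ 0 and every m ∈ ℤ, the infimum of E_m[a] over all finitely supported sequences a : ℕ → ℝ is greater than or equal to the infimum of E_0[a] over all finitely supported sequences a : ℕ → ℝ. -/

import Mathlib

/-!
Since `√(n + m₊ + 1) ≥ √(n + 1)` and the Coulomb matrix `V_m = v^{m,0} + v^{m,1}` satisfies
`0 ≤ V_m ≤ V_0` entrywise, `E_m[a] ≥ E_0[|a|]` for every `Z ≥ 0`.

The bound `V_m ≤ V_0` rests on two monotonicity facts. First, `v^{m,0}` decreases in `|m|`.
Second, `v^{0,0}_{n,n'} = √π ∑_k β_k β_{n-k} β_{n'-k}` with `β_j = Γ(j+1/2)/(√π j!) = C(2j,j)/4^j`,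
the coefficients of `(1-x)^{-1/2}`; since their self-convolution is identically `1`, this matrix
decreases along the diagonal, which handles `v^{m,1}_{n,n'} = v^{m+1,0}_{n+1,n'+1}` for `m < 0`.
-/

open Real

/-- Pochhammer symbol `(x)_a = Γ(x+a)/Γ(x)` for real arguments. -/
noncomputable def poch (x a : ℝ) : ℝ := Real.Gamma (x + a) / Real.Gamma x

/-- Coulomb matrix elements `v^{m,0}_{n,n'}`. -/
noncomputable def v0 (m : ℤ) (n n' : ℕ) : ℝ :=
  (1 / (Real.pi * Real.sqrt (poch ((n : ℝ) + 1) ((|m| : ℤ) : ℝ) *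
      poch ((n' : ℝ) + 1) ((|m| : ℤ) : ℝ)))) *
    ∑ k ∈ Finset.range (min n n' + 1),
      poch ((k : ℝ) + 1) (((|m| : ℤ) : ℝ) - 1/2) /
        (poch ((n : ℝ) - (k : ℝ) + 1/2) (1/2) * poch ((n' : ℝ) - (k : ℝ) + 1/2) (1/2))

/-- Coulomb matrix elements `v^{m,1}_{n,n'}`. -/
noncomputable def v1 (m : ℤ) (n n' : ℕ) : ℝ :=
  if 0 ≤ m then v0 (m + 1) n n' else v0 (m + 1) (n + 1) (n' + 1)

/-- The quadratic form `E_m[a]` at coupling `Z`. -/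
noncomputable def Eform (Z : ℝ) (m : ℤ) (a : ℕ → ℝ) : ℝ :=
  (∑' n : ℕ, 2 * Real.sqrt ((n : ℝ) + ((max m 0 : ℤ) : ℝ) + 1) * a n ^ 2)
    - (Z / 2) * ∑' n : ℕ, ∑' n' : ℕ, a n * (v0 m n n' + v1 m n n') * a n'

/-- The critical coupling constant `Z_c`. -/
noncomputable def Zc : ℝ :=
  (Real.Gamma (1/4) ^ 4 / (8 * Real.pi ^ 2) + 8 * Real.pi ^ 2 / Real.Gamma (1/4) ^ 4)⁻¹

open Finset

noncomputable def gammaHalfRatio (j : ℕ) : ℝ := Gamma (j + 1/2) / (√π * Gamma (j + 1))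

local notation "β" => gammaHalfRatio

theorem gammaHalfRatio_pos (j : ℕ) : 0 < β j := by
  unfold gammaHalfRatio
  have := Gamma_pos_of_pos (by positivity : (0:ℝ) < j + 1/2)
  have := Gamma_pos_of_pos (by positivity : (0:ℝ) < j + 1)
  positivity

@[simp] theorem gammaHalfRatio_zero : β 0 = 1 := by
  have : (0 : ℝ) < √π := by positivity
  rw [gammaHalfRatio, Nat.cast_zero, zero_add, zero_add, Gamma_one, Gamma_one_half_eq, mul_one,
    div_self this.ne']

theorem succ_mul_gammaHalfRatio_succ (j : ℕ) : (j + 1 : ℝ) * β (j + 1) = (j + 1/2) * β j := by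
  have h1 : ((j + 1 : ℕ) : ℝ) + 1/2 = (j + 1/2) + 1 := by push_cast; ring
  have h2 : ((j + 1 : ℕ) : ℝ) + 1 = (j + 1) + 1 := by push_cast; ring
  have : 0 < Gamma (j + 1) := Gamma_pos_of_pos (by positivity)
  have : (0 : ℝ) < √π := by positivity
  simp only [gammaHalfRatio, h1, h2, Gamma_add_one (by positivity : (j : ℝ) + 1/2 ≠ 0),
    Gamma_add_one (by positivity : (j : ℝ) + 1 ≠ 0)]
  field_simp

theorem gammaHalfRatio_antitone : Antitone β := by
  refine antitone_nat_of_succ_le fun j => ?_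
  have h := succ_mul_gammaHalfRatio_succ j
  nlinarith [gammaHalfRatio_pos j, gammaHalfRatio_pos (j + 1)]

theorem two_mul_sum_range_natCast_mul_conv_self (f : ℕ → ℝ) (N : ℕ) :
    2 * ∑ k ∈ range (N + 1), (k : ℝ) * (f k * f (N - k))
      = N * ∑ k ∈ range (N + 1), f k * f (N - k) := by
  have hrefl : ∑ k ∈ range (N + 1), (k : ℝ) * (f k * f (N - k))
      = ∑ k ∈ range (N + 1), ((N : ℝ) - k) * (f k * f (N - k)) := by
    rw [← sum_range_reflect]
    refine sum_congr rfl fun k hk => ?_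
    have hkN : k ≤ N := Nat.lt_succ_iff.mp (mem_range.mp hk)
    rw [Nat.add_sub_cancel, Nat.sub_sub_self hkN, Nat.cast_sub hkN, mul_comm (f (N - k))]
  rw [two_mul]
  nth_rewrite 2 [hrefl]
  rw [← sum_add_distrib, mul_sum]
  exact sum_congr rfl fun k _ => by ring

theorem sum_range_gammaHalfRatio_mul (N : ℕ) : ∑ k ∈ range (N + 1), β k * β (N - k) = 1 := by
  induction N with
  | zero => simp
  | succ N ih =>
    have hshift : ∑ k ∈ range (N + 2), (k : ℝ) * (β k * β (N + 1 - k))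
        = ∑ j ∈ range (N + 1), ((j : ℝ) + 1/2) * (β j * β (N - j)) := by
      rw [sum_range_succ']
      simp only [Nat.cast_zero, zero_mul, add_zero]
      refine sum_congr rfl fun j _ => ?_
      rw [show N + 1 - (j + 1) = N - j by omega, ← mul_assoc, ← mul_assoc, Nat.cast_succ,
        succ_mul_gammaHalfRatio_succ]
    have hsplit : ∑ j ∈ range (N + 1), ((j : ℝ) + 1/2) * (β j * β (N - j))
        = ∑ j ∈ range (N + 1), (j : ℝ) * (β j * β (N - j))
          + 1/2 * ∑ j ∈ range (N + 1), β j * β (N - j) := by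
      rw [mul_sum, ← sum_add_distrib]
      exact sum_congr rfl fun j _ => by ring
    -- with `c_N = ∑ β_k β_{N-k}`:
    -- `(N+1) c_{N+1} = 2 ∑ k β_k β_{N+1-k} = 2 ∑ (j + 1/2) β_j β_{N-j} = N c_N + c_N`
    have hN1 := two_mul_sum_range_natCast_mul_conv_self β (N + 1)
    push_cast at hN1
    have key : ((N : ℝ) + 1) * ∑ k ∈ range (N + 2), β k * β (N + 1 - k) = (N + 1) * 1 := by
      linear_combination -hN1 + 2 * hshift + 2 * hsplit
        + two_mul_sum_range_natCast_mul_conv_self β N + ((N : ℝ) + 1) * ih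
    exact mul_left_cancel₀ (by positivity) key

theorem sum_range_sub_gammaHalfRatio_mul (N : ℕ) :
    ∑ k ∈ range (N + 1), (β k - β (k + 1)) * β (N - k) = β (N + 1) := by
  have hsucc := sum_range_gammaHalfRatio_mul (N + 1)
  rw [sum_range_succ', Nat.sub_zero, gammaHalfRatio_zero, one_mul] at hsucc
  simp only [show ∀ k, N + 1 - (k + 1) = N - k from fun k => by omega] at hsucc
  simp only [sub_mul, sum_sub_distrib, sum_range_gammaHalfRatio_mul]
  linarith

noncomputable def tripleConv (n n' : ℕ) : ℝ :=
  ∑ k ∈ range (min n n' + 1), β k * β (n - k) * β (n' - k)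

theorem tripleConv_comm (n n' : ℕ) : tripleConv n n' = tripleConv n' n := by
  simp only [tripleConv, min_comm n, mul_right_comm]

theorem tripleConv_succ_succ_le_of_le {n n' : ℕ} (h : n ≤ n') :
    tripleConv (n + 1) (n' + 1) ≤ tripleConv n n' := by
  have hmin : min (n + 1) (n' + 1) = n + 1 := min_eq_left (by omega)
  calc tripleConv (n + 1) (n' + 1)
      = ∑ j ∈ range (n + 1), β (j + 1) * β (n - j) * β (n' - j) + β (n + 1) * β (n' + 1) := by
        rw [tripleConv, hmin, sum_range_succ']
        simp [Nat.add_sub_add_right]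
    _ = ∑ j ∈ range (n + 1), (β (j + 1) * β (n - j) * β (n' - j)
          + (β j - β (j + 1)) * β (n - j) * β (n' + 1)) := by
        rw [sum_add_distrib, ← sum_mul, sum_range_sub_gammaHalfRatio_mul]
    _ ≤ ∑ j ∈ range (n + 1), (β (j + 1) * β (n - j) * β (n' - j)
          + (β j - β (j + 1)) * β (n - j) * β (n' - j)) := by
        gcongr with j
        · exact mul_nonneg (sub_nonneg.mpr (gammaHalfRatio_antitone j.le_succ))
            (gammaHalfRatio_pos _).le
        · exact gammaHalfRatio_antitone (by omega)
    _ = tripleConv n n' := by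
        rw [tripleConv, min_eq_left h]
        exact sum_congr rfl fun j _ => by ring

theorem tripleConv_succ_succ_le (n n' : ℕ) : tripleConv (n + 1) (n' + 1) ≤ tripleConv n n' := by
  rcases le_total n n' with h | h
  · exact tripleConv_succ_succ_le_of_le h
  · rw [tripleConv_comm, tripleConv_comm n]
    exact tripleConv_succ_succ_le_of_le h

theorem poch_pos {x a : ℝ} (hx : 0 < x) (hxa : 0 < x + a) : 0 < poch x a :=
  div_pos (Gamma_pos_of_pos hxa) (Gamma_pos_of_pos hx)

theorem poch_add_one {x a : ℝ} (hxa : 0 < x + a) : poch x (a + 1) = poch x a * (x + a) := by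
  rw [poch, poch, ← add_assoc, Gamma_add_one hxa.ne', div_mul_eq_mul_div, mul_comm]

theorem poch_zero {x : ℝ} (hx : 0 < x) : poch x 0 = 1 := by
  rw [poch, add_zero, div_self (Gamma_pos_of_pos hx).ne']

theorem poch_natCast_add_one_neg_half (k : ℕ) : poch (k + 1) (-(1/2)) = √π * β k := by
  have : (0 : ℝ) < √π := by positivity
  rw [poch, gammaHalfRatio, show (k : ℝ) + 1 + -(1/2) = k + 1/2 by ring]
  field_simp

theorem poch_natCast_add_half_half (j : ℕ) : poch (j + 1/2) (1/2) = (√π * β j)⁻¹ := by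
  have : 0 < Gamma (j + 1/2) := Gamma_pos_of_pos (by positivity)
  rw [poch, gammaHalfRatio, show (j : ℝ) + 1/2 + 1/2 = j + 1 by ring]
  field_simp

theorem v0_abs (m : ℤ) (n n' : ℕ) : v0 |m| n n' = v0 m n n' := by
  rw [v0, v0, abs_abs]

theorem v0_zero (n n' : ℕ) : v0 0 n n' = √π * tripleConv n n' := by
  have hπ : √π * √π = π := mul_self_sqrt pi_pos.le
  have : 0 < √π := by positivity
  simp only [v0, tripleConv, abs_zero, Int.cast_zero, zero_sub,
    poch_zero (by positivity : (0 : ℝ) < n + 1), poch_zero (by positivity : (0 : ℝ) < n' + 1),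
    mul_one, sqrt_one, mul_sum]
  refine sum_congr rfl fun k hk => ?_
  have hk' : k ≤ min n n' := Nat.lt_succ_iff.mp (mem_range.mp hk)
  rw [← Nat.cast_sub (hk'.trans (min_le_left _ _)), ← Nat.cast_sub (hk'.trans (min_le_right _ _)),
    poch_natCast_add_one_neg_half, poch_natCast_add_half_half, poch_natCast_add_half_half]
  field_simp
  linear_combination (β k * β (n - k) * β (n' - k)) * hπ

theorem v0_summand_pos {R : ℝ} (hR : 0 ≤ R) {n n' k : ℕ} (hk : k ∈ range (min n n' + 1)) :
    0 < poch ((k : ℝ) + 1) (R - 1/2) /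
      (poch ((n : ℝ) - k + 1/2) (1/2) * poch ((n' : ℝ) - k + 1/2) (1/2)) := by
  have hk' : k ≤ min n n' := Nat.lt_succ_iff.mp (mem_range.mp hk)
  have hkn : (k : ℝ) ≤ n := by exact_mod_cast hk'.trans (min_le_left _ _)
  have hkn' : (k : ℝ) ≤ n' := by exact_mod_cast hk'.trans (min_le_right _ _)
  have := poch_pos (x := k + 1) (a := R - 1/2) (by positivity)
    (by linarith [k.cast_nonneg (α := ℝ)])
  have := poch_pos (x := n - k + 1/2) (a := 1/2) (by linarith) (by linarith)
  have := poch_pos (x := n' - k + 1/2) (a := 1/2) (by linarith) (by linarith)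
  positivity

theorem v0_nonneg (m : ℤ) (n n' : ℕ) : 0 ≤ v0 m n n' := by
  have hM : (0 : ℝ) ≤ ((|m| : ℤ) : ℝ) := by exact_mod_cast abs_nonneg m
  exact mul_nonneg (by positivity) (sum_nonneg fun k hk => (v0_summand_pos hM hk).le)

theorem v0_succ_le {m : ℤ} (hm : 0 ≤ m) (n n' : ℕ) : v0 (m + 1) n n' ≤ v0 m n n' := by
  rw [v0, v0, abs_of_nonneg hm, abs_of_nonneg (by omega), Int.cast_add, Int.cast_one]
  have hR : (0 : ℝ) ≤ m := by exact_mod_cast hm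
  set R : ℝ := (m : ℝ)
  set G := √((n + 1 + R) * (n' + 1 + R))
  have hG : 0 < G := sqrt_pos.mpr (by positivity)
  have hprefactor : √(poch ((n : ℝ) + 1) (R + 1) * poch ((n' : ℝ) + 1) (R + 1))
      = √(poch ((n : ℝ) + 1) R * poch ((n' : ℝ) + 1) R) * G := by
    rw [poch_add_one (by positivity), poch_add_one (by positivity), ← sqrt_mul (by
      have := poch_pos (x := (n : ℝ) + 1) (a := R) (by positivity) (by positivity)
      have := poch_pos (x := (n' : ℝ) + 1) (a := R) (by positivity) (by positivity)
      positivity)]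
    ring_nf
  -- each summand gains the factor `k + R + 1/2 ≤ min n n' + R + 1 ≤ G`
  have hsum : ∑ k ∈ range (min n n' + 1), poch ((k : ℝ) + 1) (R + 1 - 1/2) /
        (poch ((n : ℝ) - k + 1/2) (1/2) * poch ((n' : ℝ) - k + 1/2) (1/2))
      ≤ G * ∑ k ∈ range (min n n' + 1), poch ((k : ℝ) + 1) (R - 1/2) /
        (poch ((n : ℝ) - k + 1/2) (1/2) * poch ((n' : ℝ) - k + 1/2) (1/2)) := by
    rw [mul_sum]
    refine sum_le_sum fun k hk => ?_
    have hk' : k ≤ min n n' := Nat.lt_succ_iff.mp (mem_range.mp hk)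
    have hkn : (k : ℝ) ≤ n := by exact_mod_cast hk'.trans (min_le_left _ _)
    have hkn' : (k : ℝ) ≤ n' := by exact_mod_cast hk'.trans (min_le_right _ _)
    have hkG : (k : ℝ) + R + 1/2 ≤ G := by
      rw [le_sqrt (by positivity) (by positivity)]
      nlinarith
    rw [show R + 1 - 1/2 = (R - 1/2) + 1 by ring, poch_add_one (by linarith), mul_div_right_comm,
      mul_comm G]
    exact mul_le_mul_of_nonneg_left (by linarith) (v0_summand_pos hR hk).le
  rw [hprefactor, show ∀ Q S : ℝ, 1 / (π * (Q * G)) * S = 1 / (π * Q) * (S / G) from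
    fun Q S => by ring]
  gcongr
  exact (div_le_iff₀' hG).mpr hsum

theorem v0_le_of_abs_le {k m : ℤ} (h : |k| ≤ |m|) (n n' : ℕ) : v0 m n n' ≤ v0 k n n' := by
  rw [← v0_abs m, ← v0_abs k]
  refine Int.leInduction (motive := fun j _ => v0 j n n' ≤ v0 |k| n n') le_rfl
    (fun j hj ih => (v0_succ_le ((abs_nonneg k).trans hj) n n').trans ih) _ h

theorem v0_add_v1_nonneg (m : ℤ) (n n' : ℕ) : 0 ≤ v0 m n n' + v1 m n n' := by
  unfold v1
  split_ifs <;> exact add_nonneg (v0_nonneg _ _ _) (v0_nonneg _ _ _)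

theorem v0_add_v1_le_v0_add_v1_zero (m : ℤ) (n n' : ℕ) :
    v0 m n n' + v1 m n n' ≤ v0 0 n n' + v1 0 n n' := by
  rw [v1, v1, if_pos le_rfl, zero_add]
  split_ifs with hm
  · exact add_le_add (v0_le_of_abs_le (by simp) n n')
      (v0_le_of_abs_le (by rw [abs_one, abs_of_nonneg (by omega)]; omega) n n')
  · have hm1 : v0 m n n' ≤ v0 1 n n' :=
      v0_le_of_abs_le (by rw [abs_one, abs_of_neg (by omega)]; omega) n n'
    have hm2 : v0 (m + 1) (n + 1) (n' + 1) ≤ v0 0 n n' := calc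
      v0 (m + 1) (n + 1) (n' + 1) ≤ v0 0 (n + 1) (n' + 1) := v0_le_of_abs_le (by simp) _ _
      _ = √π * tripleConv (n + 1) (n' + 1) := v0_zero _ _
      _ ≤ √π * tripleConv n n' := by gcongr; exact tripleConv_succ_succ_le n n'
      _ = v0 0 n n' := (v0_zero n n').symm
    linarith

theorem Eform_eq_sum (Z : ℝ) (m : ℤ) {a : ℕ → ℝ} {s : Finset ℕ} (hs : ∀ n ∉ s, a n = 0) :
    Eform Z m a = ∑ n ∈ s, 2 * √((n : ℝ) + ((max m 0 : ℤ) : ℝ) + 1) * a n ^ 2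
      - Z / 2 * ∑ n ∈ s, ∑ n' ∈ s, a n * (v0 m n n' + v1 m n n') * a n' := by
  rw [Eform, tsum_eq_sum fun n hn => by simp [hs n hn],
    tsum_eq_sum fun n hn => by simp [hs n hn]]
  congr 2
  exact sum_congr rfl fun n _ => tsum_eq_sum fun n' hn' => by simp [hs n' hn']

theorem Eform_zero_abs_le (Z : ℝ) (hZ : 0 ≤ Z) (m : ℤ) {a : ℕ → ℝ}
    (ha : (Function.support a).Finite) : Eform Z 0 (|a ·|) ≤ Eform Z m a := by
  set s := ha.toFinset
  have hs : ∀ n ∉ s, a n = 0 := by simp [s]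
  rw [Eform_eq_sum Z m hs, Eform_eq_sum Z 0 (s := s) fun n hn => by simp [hs n hn]]
  have hkinetic : ∑ n ∈ s, 2 * √((n : ℝ) + ((max (0 : ℤ) 0 : ℤ) : ℝ) + 1) * |a n| ^ 2
      ≤ ∑ n ∈ s, 2 * √((n : ℝ) + ((max m 0 : ℤ) : ℝ) + 1) * a n ^ 2 := by
    refine sum_le_sum fun n _ => ?_
    have hmax : ((max (0 : ℤ) 0 : ℤ) : ℝ) ≤ ((max m 0 : ℤ) : ℝ) := Int.cast_le.mpr (by simp)
    rw [sq_abs]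
    gcongr
  have hpotential : ∑ n ∈ s, ∑ n' ∈ s, a n * (v0 m n n' + v1 m n n') * a n'
      ≤ ∑ n ∈ s, ∑ n' ∈ s, |a n| * (v0 0 n n' + v1 0 n n') * |a n'| := by
    refine sum_le_sum fun n _ => sum_le_sum fun n' _ => ?_
    calc a n * (v0 m n n' + v1 m n n') * a n'
        ≤ |a n * (v0 m n n' + v1 m n n') * a n'| := le_abs_self _
      _ = |a n| * (v0 m n n' + v1 m n n') * |a n'| := by
          rw [abs_mul, abs_mul, abs_of_nonneg (v0_add_v1_nonneg m n n')]
      _ ≤ |a n| * (v0 0 n n' + v1 0 n n') * |a n'| := by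
          gcongr |a n| * ?_ * |a n'|
          exact v0_add_v1_le_v0_add_v1_zero m n n'
  linarith [mul_le_mul_of_nonneg_left hpotential (by positivity : 0 ≤ Z / 2)]

/-- The infimum of `E_m` over finitely supported sequences is at least the infimum of
`E_0`, expressed via lower bounds: every lower bound of the values of `E_0` is a lower
bound of the values of `E_m`. -/
theorem inf_Em_ge_inf_E0 (Z : ℝ) (hZ : 0 ≤ Z) (m : ℤ) (b : ℝ)
    (hb : ∀ a : ℕ → ℝ, (Function.support a).Finite → b ≤ Eform Z 0 a) :
    ∀ a : ℕ → ℝ, (Function.support a).Finite → b ≤ Eform Z m a := fun a ha =>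
  (hb _ (ha.subset fun n hn => by simpa using hn)).trans (Eform_zero_abs_le Z hZ m ha)
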